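/- arXiv:1810.07325 — 4 statements merged into one kernel-verified Lean document; each statement's English description precedes it below -/
import Mathlib

section
/- Let n ≥ 1, let R be an algebraic Chern curvature tensor on ℂⁿ that is Griffiths non-positive, and let ε ≥ 0. Set R^ε := R − ε·B. Then for all u, v ∈ ℂⁿ and every unit vector x ∈ ℂⁿ (‖x‖ = 1): |R^ε(u,v̄,x,x̄)|² ≤ Ric^ε(u,ū) · Ric^ε(v,v̄). -/
open Complex BigOperators

/-- The quartic curvature contraction R(u, v̄, x, ȳ). -/
noncomputable def chernQuad {n : ℕ} (R : Fin n → Fin n → Fin n → Fin n → ℂ)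
    (u v x y : EuclideanSpace ℂ (Fin n)) : ℂ :=
  ∑ i, ∑ j, ∑ k, ∑ l,
    R i j k l * u i * (starRingEnd ℂ) (v j) * x k * (starRingEnd ℂ) (y l)

/-- The tensor B_{i j̄ k l̄} = g_{i j̄} g_{k l̄} + g_{i l̄} g_{k j̄} for the standard metric. -/
noncomputable def chernB {n : ℕ} (i j k l : Fin n) : ℂ :=
  (if i = j then 1 else 0) * (if k = l then 1 else 0) +
    (if i = l then 1 else 0) * (if k = j then 1 else 0)

/-- The first Ricci form Ric(X, X̄) = Re ∑ₖ R(X, X̄, eₖ, ēₖ). -/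
noncomputable def chernRic {n : ℕ} (R : Fin n → Fin n → Fin n → Fin n → ℂ)
    (X : EuclideanSpace ℂ (Fin n)) : ℝ :=
  (∑ k, chernQuad R X X (EuclideanSpace.single k 1) (EuclideanSpace.single k 1)).re

/-
For a unit vector `x`, `H(u, v) = R(u, v̄, x, x̄)` is a negative semidefinite Hermitian form, so
Cauchy–Schwarz gives `|H(u, v)|² ≤ H(u, u) H(v, v)`. The Ricci form `Ric(u)` is the trace of the
negative semidefinite form `(y, z) ↦ R(u, ū, y, z̄)`, and such a trace is at most the value of the
form at any unit vector; thus `Ric(u) ≤ H(u, u) ≤ 0`, and multiplying the two non-positive bounds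
gives the claim. Hermitian symmetry and Griffiths non-positivity pass from `R` to `R - εB`,
because `B` is Hermitian symmetric and `B(X, X̄, Y, Ȳ) = ‖X‖²‖Y‖² + |⟨X, Y⟩|² ≥ 0`.
-/

namespace ChernCurvature

variable {ι : Type*} [Fintype ι]

noncomputable def hermForm (N : ι → ι → ℂ) (u v : EuclideanSpace ℂ ι) : ℂ :=
  ∑ i, ∑ j, N i j * u i * starRingEnd ℂ (v j)

lemma starRingEnd_hermForm (N : ι → ι → ℂ) (u v : EuclideanSpace ℂ ι) :
    starRingEnd ℂ (hermForm N u v) = hermForm (fun i j => starRingEnd ℂ (N j i)) v u := by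
  simp only [hermForm, map_sum, map_mul, RingHomCompTriple.comp_apply, RingHom.id_apply]
  rw [Finset.sum_comm]
  exact Finset.sum_congr rfl fun _ _ => Finset.sum_congr rfl fun _ _ => by ring

lemma conj_hermForm {N : ι → ι → ℂ} (hN : ∀ i j, starRingEnd ℂ (N i j) = N j i)
    (u v : EuclideanSpace ℂ ι) : starRingEnd ℂ (hermForm N u v) = hermForm N v u := by
  simp only [starRingEnd_hermForm, hN]

lemma hermForm_add_right (N : ι → ι → ℂ) (u v w : EuclideanSpace ℂ ι) :
    hermForm N u (v + w) = hermForm N u v + hermForm N u w := by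
  simp only [hermForm, PiLp.add_apply, map_add, mul_add, Finset.sum_add_distrib]

lemma hermForm_smul_right (N : ι → ι → ℂ) (u v : EuclideanSpace ℂ ι) (c : ℂ) :
    hermForm N u (c • v) = starRingEnd ℂ c * hermForm N u v := by
  simp only [hermForm, PiLp.smul_apply, smul_eq_mul, map_mul, Finset.mul_sum]
  exact Finset.sum_congr rfl fun _ _ => Finset.sum_congr rfl fun _ _ => by ring

lemma hermForm_single_single [DecidableEq ι] (N : ι → ι → ℂ) (k : ι) :
    hermForm N (EuclideanSpace.single k 1) (EuclideanSpace.single k 1) = N k k := by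
  simp [hermForm]

/-- Arguments are swapped because Mathlib's inner products are conjugate-linear in the first
argument. -/
@[reducible]
noncomputable def negHermFormCore {N : ι → ι → ℂ} (hN : ∀ i j, starRingEnd ℂ (N i j) = N j i)
    (hneg : ∀ y, (hermForm N y y).re ≤ 0) : PreInnerProductSpace.Core ℂ (EuclideanSpace ℂ ι) where
  inner u v := -hermForm N v u
  conj_inner_symm u v := by rw [map_neg, conj_hermForm hN]
  re_inner_nonneg u := by simpa using hneg u
  add_left u v w := by rw [hermForm_add_right, neg_add]
  smul_left u v c := by rw [hermForm_smul_right, mul_neg]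

theorem norm_hermForm_sq_le {N : ι → ι → ℂ} (hN : ∀ i j, starRingEnd ℂ (N i j) = N j i)
    (hneg : ∀ y, (hermForm N y y).re ≤ 0) (u v : EuclideanSpace ℂ ι) :
    ‖hermForm N u v‖ ^ 2 ≤ (hermForm N u u).re * (hermForm N v v).re := by
  have h := @InnerProductSpace.Core.inner_mul_inner_self_le ℂ _ _ _ _ (negHermFormCore hN hneg) v u
  have hvu : ‖hermForm N v u‖ = ‖hermForm N u v‖ := by rw [← conj_hermForm hN, RCLike.norm_conj]
  change ‖-hermForm N u v‖ * ‖-hermForm N v u‖ ≤ (-hermForm N v v).re * (-hermForm N u u).re at h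
  rwa [norm_neg, norm_neg, hvu, ← sq, neg_re, neg_re, neg_mul_neg, mul_comm] at h

lemma sum_mul_conj_self (x : EuclideanSpace ℂ ι) :
    ∑ k, x k * starRingEnd ℂ (x k) = ((‖x‖ ^ 2 : ℝ) : ℂ) := by
  simp [EuclideanSpace.norm_sq_eq, Complex.mul_conj, Complex.normSq_eq_norm_sq]

lemma sum_hermForm_eq (N : ι → ι → ℂ) {κ : Type*} [Fintype κ] (w : κ → EuclideanSpace ℂ ι) :
    ∑ k, hermForm N (w k) (w k) = ∑ p, ∑ q, N p q * ∑ k, w k p * starRingEnd ℂ (w k q) := by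
  simp only [hermForm, Finset.mul_sum]
  rw [Finset.sum_comm]
  refine Finset.sum_congr rfl fun p _ => ?_
  rw [Finset.sum_comm]
  exact Finset.sum_congr rfl fun q _ => Finset.sum_congr rfl fun k _ => by ring

/-- With `P = 1 - x xᴴ` the orthogonal projection onto `xᗮ`, the vectors `P eₖ` satisfy
`∑ₖ (P eₖ)(P eₖ)ᴴ = P² = P`; hence `tr N - N(x, x) = ∑ₖ N(P eₖ, P eₖ)`. -/
lemma sum_projection_mul_conj [DecidableEq ι] {x : EuclideanSpace ℂ ι} (hx : ‖x‖ = 1) (p q : ι) :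
    ∑ k, (EuclideanSpace.single k 1 - starRingEnd ℂ (x k) • x : EuclideanSpace ℂ ι) p *
        starRingEnd ℂ
          ((EuclideanSpace.single k 1 - starRingEnd ℂ (x k) • x : EuclideanSpace ℂ ι) q) =
      (if p = q then 1 else 0) - x p * starRingEnd ℂ (x q) := by
  have hx2 : ∑ k, x k * starRingEnd ℂ (x k) = 1 := by simp [sum_mul_conj_self, hx]
  have hidem : ∑ k, starRingEnd ℂ (x k) * x p * (x k * starRingEnd ℂ (x q)) =
      x p * starRingEnd ℂ (x q) := by
    rw [← mul_one (x p * _), ← hx2, Finset.mul_sum]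
    exact Finset.sum_congr rfl fun k _ => by ring
  simp only [PiLp.sub_apply, PiLp.single_apply, PiLp.smul_apply, smul_eq_mul, map_sub,
    MonoidWithZeroHom.map_ite_one_zero, map_mul, RingHomCompTriple.comp_apply, RingHom.id_apply,
    mul_sub, mul_ite, mul_one, mul_zero, sub_mul, ite_mul, one_mul, zero_mul,
    Finset.sum_sub_distrib, Finset.sum_ite_eq, Finset.mem_univ, ↓reduceIte]
  rw [hidem]
  ring

theorem re_sum_diag_le_re_hermForm {N : ι → ι → ℂ} (hneg : ∀ y, (hermForm N y y).re ≤ 0)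
    {x : EuclideanSpace ℂ ι} (hx : ‖x‖ = 1) : (∑ k, N k k).re ≤ (hermForm N x x).re := by
  classical
  have key : ∑ k, hermForm N (EuclideanSpace.single k 1 - starRingEnd ℂ (x k) • x)
      (EuclideanSpace.single k 1 - starRingEnd ℂ (x k) • x) = ∑ k, N k k - hermForm N x x := by
    rw [sum_hermForm_eq]
    simp only [sum_projection_mul_conj hx]
    simp [hermForm, mul_sub, Finset.sum_sub_distrib, mul_assoc]
  have hsum := Finset.sum_nonpos fun k (_ : k ∈ Finset.univ) =>
    hneg (EuclideanSpace.single k 1 - starRingEnd ℂ (x k) • x)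
  rw [← Complex.re_sum, key, sub_re] at hsum
  linarith

section Curvature

variable {n : ℕ}

lemma chernQuad_eq_hermForm_fst (R : Fin n → Fin n → Fin n → Fin n → ℂ)
    (u v x y : EuclideanSpace ℂ (Fin n)) :
    chernQuad R u v x y = hermForm (fun i j => hermForm (R i j) x y) u v := by
  simp only [chernQuad, hermForm, Finset.sum_mul]
  exact Finset.sum_congr rfl fun i _ => Finset.sum_congr rfl fun j _ =>
    Finset.sum_congr rfl fun k _ => Finset.sum_congr rfl fun l _ => by ring

lemma chernQuad_eq_hermForm_snd (R : Fin n → Fin n → Fin n → Fin n → ℂ)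
    (u v x y : EuclideanSpace ℂ (Fin n)) :
    chernQuad R u v x y = hermForm (fun k l => hermForm (fun i j => R i j k l) u v) x y := by
  simp only [chernQuad, hermForm, Finset.sum_mul]
  calc _ = ∑ i, ∑ k, ∑ l, ∑ j, R i j k l * u i * starRingEnd ℂ (v j) * x k * starRingEnd ℂ (y l) :=
        Finset.sum_congr rfl fun _ _ => Finset.sum_comm_cycle.trans Finset.sum_comm_cycle
    _ = _ := Finset.sum_comm.trans (Finset.sum_congr rfl fun _ _ => Finset.sum_comm)

lemma chernRic_eq_re_sum_hermForm (R : Fin n → Fin n → Fin n → Fin n → ℂ)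
    (X : EuclideanSpace ℂ (Fin n)) :
    chernRic R X = (∑ k, hermForm (fun i j => R i j k k) X X).re := by
  simp only [chernRic, chernQuad_eq_hermForm_snd, hermForm_single_single]

theorem chernRic_le_re_chernQuad {R : Fin n → Fin n → Fin n → Fin n → ℂ}
    (hR : ∀ X Y, (chernQuad R X X Y Y).re ≤ 0) {x : EuclideanSpace ℂ (Fin n)} (hx : ‖x‖ = 1)
    (X : EuclideanSpace ℂ (Fin n)) : chernRic R X ≤ (chernQuad R X X x x).re := by
  rw [chernRic_eq_re_sum_hermForm, chernQuad_eq_hermForm_snd]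
  exact re_sum_diag_le_re_hermForm (fun y => (chernQuad_eq_hermForm_snd R X X y y) ▸ hR X y) hx

theorem norm_chernQuad_sq_le {R : Fin n → Fin n → Fin n → Fin n → ℂ}
    (hsym : ∀ i j k l, starRingEnd ℂ (R i j k l) = R j i l k)
    (hR : ∀ X Y, (chernQuad R X X Y Y).re ≤ 0) (u v x : EuclideanSpace ℂ (Fin n)) :
    ‖chernQuad R u v x x‖ ^ 2 ≤ (chernQuad R u u x x).re * (chernQuad R v v x x).re := by
  simp only [chernQuad_eq_hermForm_fst R _ _ x x]
  refine norm_hermForm_sq_le (fun i j => ?_)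
    (fun y => (chernQuad_eq_hermForm_fst R y y x x) ▸ hR y x) u v
  simp only [starRingEnd_hermForm, hsym]

theorem norm_chernQuad_sq_le_chernRic_mul_chernRic {R : Fin n → Fin n → Fin n → Fin n → ℂ}
    (hsym : ∀ i j k l, starRingEnd ℂ (R i j k l) = R j i l k)
    (hR : ∀ X Y, (chernQuad R X X Y Y).re ≤ 0) {x : EuclideanSpace ℂ (Fin n)} (hx : ‖x‖ = 1)
    (u v : EuclideanSpace ℂ (Fin n)) :
    ‖chernQuad R u v x x‖ ^ 2 ≤ chernRic R u * chernRic R v :=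
  (norm_chernQuad_sq_le hsym hR u v x).trans <| mul_le_mul_of_nonpos_of_nonpos
    (chernRic_le_re_chernQuad hR hx u) (chernRic_le_re_chernQuad hR hx v)
    ((chernRic_le_re_chernQuad hR hx u).trans (hR u x)) (hR v x)

lemma chernQuad_sub_mul (R S : Fin n → Fin n → Fin n → Fin n → ℂ) (c : ℂ)
    (u v x y : EuclideanSpace ℂ (Fin n)) :
    chernQuad (fun i j k l => R i j k l - c * S i j k l) u v x y =
      chernQuad R u v x y - c * chernQuad S u v x y := by
  simp only [chernQuad, Finset.mul_sum, ← Finset.sum_sub_distrib]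
  exact Finset.sum_congr rfl fun _ _ => Finset.sum_congr rfl fun _ _ =>
    Finset.sum_congr rfl fun _ _ => Finset.sum_congr rfl fun _ _ => by ring

lemma starRingEnd_chernB (i j k l : Fin n) : starRingEnd ℂ (chernB i j k l) = chernB j i l k := by
  simp only [chernB, map_add, map_mul, MonoidWithZeroHom.map_ite_one_zero, @eq_comm _ j i,
    @eq_comm _ l k, @eq_comm _ l i, @eq_comm _ j k]
  ring

lemma chernQuad_chernB (X Y : EuclideanSpace ℂ (Fin n)) :
    chernQuad chernB X X Y Y = (∑ i, X i * starRingEnd ℂ (X i)) * (∑ k, Y k * starRingEnd ℂ (Y k)) +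
      (∑ i, X i * starRingEnd ℂ (Y i)) * starRingEnd ℂ (∑ i, X i * starRingEnd ℂ (Y i)) := by
  rw [chernQuad_eq_hermForm_fst, map_sum, Finset.sum_mul_sum, Finset.sum_mul_sum]
  simp only [hermForm, chernB, mul_ite, mul_one, mul_zero, add_mul, ite_mul, one_mul,
    zero_mul, Finset.sum_add_distrib, Finset.sum_ite_eq, Finset.mem_univ, ↓reduceIte,
    Finset.sum_ite_irrel, Finset.sum_const_zero, Finset.sum_ite_eq', Finset.sum_mul, map_mul,
    RingHomCompTriple.comp_apply, RingHom.id_apply]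
  congr 1 <;> exact Finset.sum_congr rfl fun _ _ => Finset.sum_congr rfl fun _ _ => by ring

lemma re_chernQuad_chernB_nonneg (X Y : EuclideanSpace ℂ (Fin n)) :
    0 ≤ (chernQuad chernB X X Y Y).re := by
  rw [chernQuad_chernB, sum_mul_conj_self, sum_mul_conj_self, Complex.mul_conj,
    ← Complex.ofReal_mul, ← Complex.ofReal_add, Complex.ofReal_re]
  exact add_nonneg (by positivity) (Complex.normSq_nonneg _)

end Curvature

end ChernCurvature

open ChernCurvature in
theorem cauchy_schwarz_ricci_eps_general {n : ℕ}
    (R : Fin n → Fin n → Fin n → Fin n → ℂ)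
    (hsym : ∀ i j k l, (starRingEnd ℂ) (R i j k l) = R j i l k)
    (hGriffiths : ∀ X Y : EuclideanSpace ℂ (Fin n), (chernQuad R X X Y Y).re ≤ 0)
    (ε : ℝ) (hε : 0 ≤ ε)
    (u v x : EuclideanSpace ℂ (Fin n)) (hx : ‖x‖ = 1) :
    ‖chernQuad (fun i j k l => R i j k l - ε * chernB i j k l) u v x x‖ ^ 2 ≤
      chernRic (fun i j k l => R i j k l - ε * chernB i j k l) u *
        chernRic (fun i j k l => R i j k l - ε * chernB i j k l) v := by
  refine norm_chernQuad_sq_le_chernRic_mul_chernRic (fun i j k l => ?_) (fun X Y => ?_) hx u v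
  · rw [map_sub, map_mul, hsym, Complex.conj_ofReal, starRingEnd_chernB]
  · rw [chernQuad_sub_mul, sub_re, re_ofReal_mul]
    linarith [hGriffiths X Y, mul_nonneg hε (re_chernQuad_chernB_nonneg X Y)]

theorem cauchy_schwarz_ricci_eps {n : ℕ} (hn : 1 ≤ n)
    (R : Fin n → Fin n → Fin n → Fin n → ℂ)
    (hsym : ∀ i j k l, (starRingEnd ℂ) (R i j k l) = R j i l k)
    (hGriffiths : ∀ X Y : EuclideanSpace ℂ (Fin n), (chernQuad R X X Y Y).re ≤ 0)
    (ε : ℝ) (hε : 0 ≤ ε)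
    (u v x : EuclideanSpace ℂ (Fin n)) (hx : ‖x‖ = 1) :
    ‖chernQuad (fun i j k l => R i j k l - ε * chernB i j k l) u v x x‖ ^ 2 ≤
      chernRic (fun i j k l => R i j k l - ε * chernB i j k l) u *
        chernRic (fun i j k l => R i j k l - ε * chernB i j k l) v :=
  cauchy_schwarz_ricci_eps_general R hsym hGriffiths ε hε u v x hx
end

section
/- Let n ≥ 2, let R be an algebraic Chern curvature tensor on ℂⁿ that is Griffiths non-positive, and let ε > 0. Set R^ε := R − ε·B. Then for all nonzero u, v ∈ ℂⁿ and every unit vector x ∈ ℂⁿ (‖x‖ = 1), the strict inequality holds: |R^ε(u,v̄,x,x̄)|² < Ric^ε(u,ū) · Ric^ε(v,v̄). -/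
open Complex BigOperators

/-! For a unit vector `x`, the form `(w, z) ↦ R^ε(w, z̄, x, x̄)` is Hermitian, and Griffiths
non-positivity together with the `-εB` term make it negative definite:
`Re R^ε(w, w̄, x, x̄) ≤ -ε‖w‖²`. Cauchy–Schwarz for this form bounds `|R^ε(u, v̄, x, x̄)|²` by the
product of its diagonal values at `u` and `v`. Each diagonal value strictly exceeds the
corresponding Ricci value: the trace of the non-positive form `Y ↦ R(w, w̄, Y, Ȳ)` is at most its
value at the unit vector `x`, while `B` lowers `Ric^ε(w, w̄)` by `(n + 1)ε‖w‖²` but the diagonal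
only by `ε(‖w‖² + |⟨w, x⟩|²) ≤ 2ε‖w‖² < (n + 1)ε‖w‖²`. Multiplying the two strict inequalities
between negative numbers gives the claim. -/

open Finset
open scoped ComplexConjugate

theorem LinearMap.norm_apply_sq_le_re_mul_re {𝕜 E : Type*} [RCLike 𝕜] [AddCommGroup E]
    [Module 𝕜 E] (h : E →ₗ[𝕜] E →ₗ⋆[𝕜] 𝕜) (hh : ∀ a b, conj (h a b) = h b a)
    (hpos : ∀ a, 0 ≤ RCLike.re (h a a)) (u v : E) :
    ‖h u v‖ ^ 2 ≤ RCLike.re (h u u) * RCLike.re (h v v) := by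
  -- inner products are conjugate-linear in the first argument, so `h` enters swapped
  let core : PreInnerProductSpace.Core 𝕜 E :=
    { inner a b := h b a
      conj_inner_symm a b := hh a b
      re_inner_nonneg := hpos
      add_left a b z := map_add (h z) a b
      smul_left a b r := map_smulₛₗ (h b) r a }
  have := @InnerProductSpace.Core.inner_mul_inner_self_le 𝕜 E _ _ _ core u v
  change ‖h v u‖ * ‖h u v‖ ≤ _ at this
  rwa [← hh u v, RCLike.norm_conj, ← sq] at this

theorem OrthonormalBasis.re_apply_le_re_sum_apply {𝕜 E ι : Type*} [RCLike 𝕜]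
    [NormedAddCommGroup E] [InnerProductSpace 𝕜 E] [Fintype ι] (b : OrthonormalBasis ι 𝕜 E)
    (h : E →ₗ[𝕜] E →ₗ⋆[𝕜] 𝕜) (hpos : ∀ a, 0 ≤ RCLike.re (h a a)) {x : E} (hx : ‖x‖ = 1) :
    RCLike.re (h x x) ≤ RCLike.re (∑ i, h (b i) (b i)) := by
  have hx' : ∑ i, conj (inner 𝕜 x (b i)) • b i = x := by
    simpa only [inner_conj_symm] using b.sum_repr' x
  have hnorm : ∑ i, conj (inner 𝕜 x (b i)) * inner 𝕜 x (b i) = 1 := by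
    simp_rw [inner_conj_symm, mul_comm (inner 𝕜 (b _) x)]
    simp [b.sum_inner_mul_inner, hx]
  have hleft : ∑ i, conj (inner 𝕜 x (b i)) * h (b i) x = h x x := by
    simpa [map_sum] using congrArg (fun y => h y x) hx'
  have hright : ∑ i, inner 𝕜 x (b i) * h x (b i) = h x x := by
    simpa [map_sum] using congrArg (fun y => h x y) hx'
  -- `b i - ⟪x, b i⟫ • x` is the projection of `b i` onto the orthogonal complement of `x`
  have hproj : ∑ i, h (b i - inner 𝕜 x (b i) • x) (b i - inner 𝕜 x (b i) • x)
      = ∑ i, h (b i) (b i) - h x x := by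
    simp only [map_sub, map_smul, map_smulₛₗ, LinearMap.sub_apply, LinearMap.smul_apply,
      smul_eq_mul, mul_sub, sum_sub_distrib, hleft, hright, ← mul_assoc, ← sum_mul, hnorm]
    ring
  have hsum : 0 ≤ RCLike.re (∑ i, h (b i - inner 𝕜 x (b i) • x) (b i - inner 𝕜 x (b i) • x)) := by
    rw [map_sum]
    exact sum_nonneg fun i _ => hpos _
  rwa [hproj, map_sub, sub_nonneg] at hsum

section Chern

variable {n : ℕ}

lemma chernQuad_add₁ (R : Fin n → Fin n → Fin n → Fin n → ℂ)
    (u u' v x y : EuclideanSpace ℂ (Fin n)) :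
    chernQuad R (u + u') v x y = chernQuad R u v x y + chernQuad R u' v x y := by
  simp only [chernQuad, PiLp.add_apply, add_mul, mul_add, sum_add_distrib]

lemma chernQuad_smul₁ (R : Fin n → Fin n → Fin n → Fin n → ℂ) (c : ℂ)
    (u v x y : EuclideanSpace ℂ (Fin n)) :
    chernQuad R (c • u) v x y = c * chernQuad R u v x y := by
  simp only [chernQuad, PiLp.smul_apply, smul_eq_mul, mul_sum]
  congr! 4
  ring

lemma chernQuad_add₂ (R : Fin n → Fin n → Fin n → Fin n → ℂ)
    (u v v' x y : EuclideanSpace ℂ (Fin n)) :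
    chernQuad R u (v + v') x y = chernQuad R u v x y + chernQuad R u v' x y := by
  simp only [chernQuad, PiLp.add_apply, map_add, add_mul, mul_add, sum_add_distrib]

lemma chernQuad_smul₂ (R : Fin n → Fin n → Fin n → Fin n → ℂ) (c : ℂ)
    (u v x y : EuclideanSpace ℂ (Fin n)) :
    chernQuad R u (c • v) x y = conj c * chernQuad R u v x y := by
  simp only [chernQuad, PiLp.smul_apply, smul_eq_mul, map_mul, mul_sum]
  congr! 4
  ring

lemma chernQuad_add₃ (R : Fin n → Fin n → Fin n → Fin n → ℂ)
    (u v x x' y : EuclideanSpace ℂ (Fin n)) :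
    chernQuad R u v (x + x') y = chernQuad R u v x y + chernQuad R u v x' y := by
  simp only [chernQuad, PiLp.add_apply, add_mul, mul_add, sum_add_distrib]

lemma chernQuad_smul₃ (R : Fin n → Fin n → Fin n → Fin n → ℂ) (c : ℂ)
    (u v x y : EuclideanSpace ℂ (Fin n)) :
    chernQuad R u v (c • x) y = c * chernQuad R u v x y := by
  simp only [chernQuad, PiLp.smul_apply, smul_eq_mul, mul_sum]
  congr! 4
  ring

lemma chernQuad_add₄ (R : Fin n → Fin n → Fin n → Fin n → ℂ)
    (u v x y y' : EuclideanSpace ℂ (Fin n)) :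
    chernQuad R u v x (y + y') = chernQuad R u v x y + chernQuad R u v x y' := by
  simp only [chernQuad, PiLp.add_apply, map_add, mul_add, sum_add_distrib]

lemma chernQuad_smul₄ (R : Fin n → Fin n → Fin n → Fin n → ℂ) (c : ℂ)
    (u v x y : EuclideanSpace ℂ (Fin n)) :
    chernQuad R u v x (c • y) = conj c * chernQuad R u v x y := by
  simp only [chernQuad, PiLp.smul_apply, smul_eq_mul, map_mul, mul_sum]
  congr! 4
  ring

noncomputable def chernForm₁₂ (R : Fin n → Fin n → Fin n → Fin n → ℂ)
    (x y : EuclideanSpace ℂ (Fin n)) :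
    EuclideanSpace ℂ (Fin n) →ₗ[ℂ] EuclideanSpace ℂ (Fin n) →ₗ⋆[ℂ] ℂ :=
  LinearMap.mk₂'ₛₗ _ _ (fun u v => chernQuad R u v x y) (chernQuad_add₁ R · · · x y)
    (chernQuad_smul₁ R · · · x y) (chernQuad_add₂ R · · · x y) (chernQuad_smul₂ R · · · x y)

noncomputable def chernForm₃₄ (R : Fin n → Fin n → Fin n → Fin n → ℂ)
    (u v : EuclideanSpace ℂ (Fin n)) :
    EuclideanSpace ℂ (Fin n) →ₗ[ℂ] EuclideanSpace ℂ (Fin n) →ₗ⋆[ℂ] ℂ :=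
  LinearMap.mk₂'ₛₗ _ _ (fun x y => chernQuad R u v x y) (chernQuad_add₃ R u v)
    (chernQuad_smul₃ R · u v) (chernQuad_add₄ R u v) (chernQuad_smul₄ R · u v)

@[simp]
lemma chernForm₁₂_apply (R : Fin n → Fin n → Fin n → Fin n → ℂ)
    (x y u v : EuclideanSpace ℂ (Fin n)) : chernForm₁₂ R x y u v = chernQuad R u v x y :=
  rfl

@[simp]
lemma chernForm₃₄_apply (R : Fin n → Fin n → Fin n → Fin n → ℂ)
    (u v x y : EuclideanSpace ℂ (Fin n)) : chernForm₃₄ R u v x y = chernQuad R u v x y :=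
  rfl

lemma conj_chernQuad {R : Fin n → Fin n → Fin n → Fin n → ℂ}
    (hR : ∀ i j k l, conj (R i j k l) = R j i l k) (u v x y : EuclideanSpace ℂ (Fin n)) :
    conj (chernQuad R u v x y) = chernQuad R v u y x := by
  simp only [chernQuad, map_sum, map_mul, hR, Complex.conj_conj]
  rw [sum_comm]
  refine sum_congr rfl fun j _ => sum_congr rfl fun i _ => ?_
  rw [sum_comm]
  refine sum_congr rfl fun l _ => sum_congr rfl fun k _ => ?_
  ring

lemma chernQuad_sub_mul (R S : Fin n → Fin n → Fin n → Fin n → ℂ) (c : ℂ)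
    (u v x y : EuclideanSpace ℂ (Fin n)) :
    chernQuad (fun i j k l => R i j k l - c * S i j k l) u v x y
      = chernQuad R u v x y - c * chernQuad S u v x y := by
  simp only [chernQuad, mul_sum, ← sum_sub_distrib]
  congr! 4
  ring

lemma chernRic_sub_mul (R S : Fin n → Fin n → Fin n → Fin n → ℂ) (ε : ℝ)
    (w : EuclideanSpace ℂ (Fin n)) :
    chernRic (fun i j k l => R i j k l - ε * S i j k l) w = chernRic R w - ε * chernRic S w := by
  simp only [chernRic, chernQuad_sub_mul, sum_sub_distrib, ← mul_sum, Complex.sub_re,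
    Complex.re_ofReal_mul]

lemma chernRic_le_re_chernQuad {R : Fin n → Fin n → Fin n → Fin n → ℂ}
    (hR : ∀ X Y : EuclideanSpace ℂ (Fin n), (chernQuad R X X Y Y).re ≤ 0)
    (w : EuclideanSpace ℂ (Fin n)) {x : EuclideanSpace ℂ (Fin n)} (hx : ‖x‖ = 1) :
    chernRic R w ≤ (chernQuad R w w x x).re := by
  have := (EuclideanSpace.basisFun (Fin n) ℂ).re_apply_le_re_sum_apply (-chernForm₃₄ R w w)
    (fun a => by simpa using hR w a) hx
  simpa [chernRic, EuclideanSpace.basisFun_apply] using this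

lemma norm_chernQuad_sq_le {R : Fin n → Fin n → Fin n → Fin n → ℂ}
    (hR : ∀ i j k l, conj (R i j k l) = R j i l k) {x : EuclideanSpace ℂ (Fin n)}
    (hneg : ∀ w, (chernQuad R w w x x).re ≤ 0) (u v : EuclideanSpace ℂ (Fin n)) :
    ‖chernQuad R u v x x‖ ^ 2 ≤ (chernQuad R u u x x).re * (chernQuad R v v x x).re := by
  have := (-chernForm₁₂ R x x).norm_apply_sq_le_re_mul_re
    (fun a b => by simp [conj_chernQuad hR]) (fun a => by simpa using hneg a) u v
  simpa using this

lemma conj_chernB (i j k l : Fin n) : conj (chernB i j k l) = chernB j i l k := by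
  simp only [chernB, map_add, map_mul, apply_ite conj, map_one, map_zero, eq_comm (a := i),
    eq_comm (a := k)]
  ring

lemma chernQuad_chernB (u v x y : EuclideanSpace ℂ (Fin n)) :
    chernQuad chernB u v x y = inner ℂ v u * inner ℂ y x + inner ℂ y u * inner ℂ v x := by
  simp only [chernQuad, chernB, PiLp.inner_apply, RCLike.inner_apply, add_mul, ite_mul, one_mul,
    zero_mul, sum_add_distrib, sum_ite_irrel, sum_const_zero, sum_ite_eq, sum_ite_eq', mem_univ,
    if_true, sum_mul_sum]
  congr! 3 <;> ring

lemma re_chernQuad_chernB_self (w x : EuclideanSpace ℂ (Fin n)) :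
    (chernQuad chernB w w x x).re = ‖w‖ ^ 2 * ‖x‖ ^ 2 + ‖inner ℂ w x‖ ^ 2 := by
  rw [chernQuad_chernB, ← inner_conj_symm x w, Complex.conj_mul', inner_self_eq_norm_sq_to_K,
    inner_self_eq_norm_sq_to_K]
  norm_cast

lemma chernRic_chernB (w : EuclideanSpace ℂ (Fin n)) :
    chernRic chernB w = (n + 1) * ‖w‖ ^ 2 := by
  have hb := (EuclideanSpace.basisFun (Fin n) ℂ).sum_inner_mul_inner w w
  simp only [EuclideanSpace.basisFun_apply] at hb
  simp only [chernRic, chernQuad_chernB, sum_add_distrib,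
    mul_comm (inner ℂ (EuclideanSpace.single _ _) w), hb]
  simp [inner_self_eq_norm_sq_to_K, ← Complex.ofReal_pow]
  ring

noncomputable def chernEps (R : Fin n → Fin n → Fin n → Fin n → ℂ) (ε : ℝ) :
    Fin n → Fin n → Fin n → Fin n → ℂ :=
  fun i j k l => R i j k l - ε * chernB i j k l

lemma conj_chernEps {R : Fin n → Fin n → Fin n → Fin n → ℂ}
    (hR : ∀ i j k l, conj (R i j k l) = R j i l k) (ε : ℝ) (i j k l : Fin n) :
    conj (chernEps R ε i j k l) = chernEps R ε j i l k := by
  simp [chernEps, hR, conj_chernB]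

lemma re_chernQuad_chernEps_self (R : Fin n → Fin n → Fin n → Fin n → ℂ) (ε : ℝ)
    (w x : EuclideanSpace ℂ (Fin n)) :
    (chernQuad (chernEps R ε) w w x x).re
      = (chernQuad R w w x x).re - ε * (‖w‖ ^ 2 * ‖x‖ ^ 2 + ‖inner ℂ w x‖ ^ 2) := by
  unfold chernEps
  rw [chernQuad_sub_mul, Complex.sub_re, Complex.re_ofReal_mul, re_chernQuad_chernB_self]

lemma chernRic_chernEps (R : Fin n → Fin n → Fin n → Fin n → ℂ) (ε : ℝ)
    (w : EuclideanSpace ℂ (Fin n)) :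
    chernRic (chernEps R ε) w = chernRic R w - ε * ((n + 1) * ‖w‖ ^ 2) := by
  unfold chernEps
  rw [chernRic_sub_mul, chernRic_chernB]

lemma re_chernQuad_chernEps_self_le {R : Fin n → Fin n → Fin n → Fin n → ℂ}
    (hR : ∀ X Y : EuclideanSpace ℂ (Fin n), (chernQuad R X X Y Y).re ≤ 0) {ε : ℝ} (hε : 0 ≤ ε)
    (w : EuclideanSpace ℂ (Fin n)) {x : EuclideanSpace ℂ (Fin n)} (hx : ‖x‖ = 1) :
    (chernQuad (chernEps R ε) w w x x).re ≤ -(ε * ‖w‖ ^ 2) := by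
  rw [re_chernQuad_chernEps_self, hx]
  nlinarith [hR w x, mul_nonneg hε (sq_nonneg ‖inner ℂ w x‖)]

lemma chernRic_chernEps_lt_re_chernQuad {R : Fin n → Fin n → Fin n → Fin n → ℂ}
    (hR : ∀ X Y : EuclideanSpace ℂ (Fin n), (chernQuad R X X Y Y).re ≤ 0) (hn : 2 ≤ n)
    {ε : ℝ} (hε : 0 < ε) {w x : EuclideanSpace ℂ (Fin n)} (hw : w ≠ 0) (hx : ‖x‖ = 1) :
    chernRic (chernEps R ε) w < (chernQuad (chernEps R ε) w w x x).re := by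
  rw [chernRic_chernEps, re_chernQuad_chernEps_self, hx]
  have hinner : ‖inner ℂ w x‖ ≤ ‖w‖ := by simpa [hx] using norm_inner_le_norm (𝕜 := ℂ) w x
  have hn' : (2 : ℝ) ≤ n := by exact_mod_cast hn
  have hlt : ‖inner ℂ w x‖ ^ 2 < n * ‖w‖ ^ 2 := by
    nlinarith [norm_pos_iff.2 hw, norm_nonneg (inner ℂ w x)]
  nlinarith [chernRic_le_re_chernQuad hR w hx, mul_lt_mul_of_pos_left hlt hε]

end Chern

theorem cauchy_schwarz_ricci_eps_strict {n : ℕ} (hn : 2 ≤ n)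
    (R : Fin n → Fin n → Fin n → Fin n → ℂ)
    (hsym : ∀ i j k l, (starRingEnd ℂ) (R i j k l) = R j i l k)
    (hGriffiths : ∀ X Y : EuclideanSpace ℂ (Fin n), (chernQuad R X X Y Y).re ≤ 0)
    (ε : ℝ) (hε : 0 < ε)
    (u v x : EuclideanSpace ℂ (Fin n)) (hu : u ≠ 0) (hv : v ≠ 0) (hx : ‖x‖ = 1) :
    ‖chernQuad (fun i j k l => R i j k l - ε * chernB i j k l) u v x x‖ ^ 2 <
      chernRic (fun i j k l => R i j k l - ε * chernB i j k l) u *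
        chernRic (fun i j k l => R i j k l - ε * chernB i j k l) v := by
  change ‖chernQuad (chernEps R ε) u v x x‖ ^ 2
    < chernRic (chernEps R ε) u * chernRic (chernEps R ε) v
  have hdiag (w) := re_chernQuad_chernEps_self_le hGriffiths hε.le w hx
  have hdiag_neg {w} (hw : w ≠ 0) : (chernQuad (chernEps R ε) w w x x).re < 0 :=
    (hdiag w).trans_lt (neg_neg_of_pos (mul_pos hε (pow_pos (norm_pos_iff.2 hw) 2)))
  have hcs := norm_chernQuad_sq_le (conj_chernEps hsym ε)
    (fun w => (hdiag w).trans (neg_nonpos.2 (by positivity))) u v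
  have hu' := chernRic_chernEps_lt_re_chernQuad hGriffiths hn hε hu hx
  have hv' := chernRic_chernEps_lt_re_chernQuad hGriffiths hn hε hv hx
  exact hcs.trans_lt (by nlinarith [hdiag_neg hu, hdiag_neg hv])
end

section
/- Let n ≥ 1, let R be an algebraic Chern curvature tensor on ℂⁿ that is Griffiths non-positive, and let ε ≥ 0. Set R^ε := R − ε·B. Then for all u, v ∈ ℂⁿ and all unit vectors k, l ∈ ℂⁿ (‖k‖ = ‖l‖ = 1): |R^ε(u,v̄,k,l̄)|² ≤ 4 · Ric^ε(u,ū) · Ric^ε(v,v̄). -/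
open Complex BigOperators

/-! ### Auxiliary machinery -/

lemma cs_abstract (a b : ℝ) (c : ℂ)
    (ha : 0 ≤ a) (hb : 0 ≤ b)
    (h : ∀ t : ℂ, 0 ≤ a - 2 * ((starRingEnd ℂ) t * c).re + Complex.normSq t * b) :
    norm c ^ 2 ≤ a * b := by
  rw [Complex.sq_norm]
  have hcc : (starRingEnd ℂ) c * c = ((Complex.normSq c : ℝ) : ℂ) := by
    rw [mul_comm, Complex.mul_conj]
  rcases eq_or_lt_of_le hb with hb0 | hb0
  · have hc : Complex.normSq c = 0 := by
      by_contra hne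
      have hpos : 0 < Complex.normSq c := lt_of_le_of_ne (Complex.normSq_nonneg c) (Ne.symm hne)
      set s : ℝ := (a + 1) / (2 * Complex.normSq c) with hs
      have h1 := h ((s : ℂ) * c)
      have hre : ((starRingEnd ℂ) ((s:ℂ) * c) * c) = (((s * Complex.normSq c : ℝ)) : ℂ) := by
        rw [map_mul, Complex.conj_ofReal, mul_assoc, hcc]
        push_cast; ring
      rw [hre, ← hb0] at h1
      simp only [Complex.ofReal_re, mul_zero, add_zero] at h1
      have h2 : s * Complex.normSq c = (a + 1) / 2 := by
        rw [hs]; field_simp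
      rw [h2] at h1
      linarith
    rw [hc, ← hb0]
    simp
  · have h1 := h ((c : ℂ) / (b : ℂ))
    have hre : ((starRingEnd ℂ) (c / (b:ℂ)) * c) = (((Complex.normSq c / b : ℝ)) : ℂ) := by
      rw [map_div₀, Complex.conj_ofReal, div_mul_eq_mul_div, hcc]
      push_cast; ring
    have hns : Complex.normSq ((c:ℂ) / (b:ℂ)) = Complex.normSq c / b ^ 2 := by
      simp [Complex.normSq_div]
      ring
    rw [hre, hns] at h1
    simp only [Complex.ofReal_re] at h1
    have hb2 : b ^ 2 > 0 := by positivity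
    have he : Complex.normSq c / b ^ 2 * b = Complex.normSq c / b := by
      field_simp
    rw [he] at h1
    have hfin : Complex.normSq c / b ≤ a := by linarith
    calc Complex.normSq c = (Complex.normSq c / b) * b := by field_simp
    _ ≤ a * b := by nlinarith

noncomputable def genF {n : ℕ} (C : Fin n → Fin n → ℂ) (w z : Fin n → ℂ) : ℂ :=
  ∑ i, ∑ j, C i j * w i * (starRingEnd ℂ) (z j)

lemma genF_herm {n : ℕ} (C : Fin n → Fin n → ℂ)
    (hherm : ∀ i j, (starRingEnd ℂ) (C i j) = C j i) (w z : Fin n → ℂ) :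
    (starRingEnd ℂ) (genF C w z) = genF C z w := by
  unfold genF
  rw [map_sum, Finset.sum_comm]
  refine Finset.sum_congr rfl fun j _ => ?_
  rw [map_sum]
  refine Finset.sum_congr rfl fun i _ => ?_
  rw [map_mul, map_mul, hherm, Complex.conj_conj]
  ring

lemma genF_expand {n : ℕ} (C : Fin n → Fin n → ℂ) (w z : Fin n → ℂ) (t : ℂ) :
    genF C (fun i => w i - t * z i) (fun i => w i - t * z i)
      = genF C w w - (starRingEnd ℂ) t * genF C w z - t * genF C z w
        + (t * (starRingEnd ℂ) t) * genF C z z := by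
  unfold genF
  simp only [Finset.mul_sum, ← Finset.sum_sub_distrib, ← Finset.sum_add_distrib]
  refine Finset.sum_congr rfl fun i _ => ?_
  refine Finset.sum_congr rfl fun j _ => ?_
  simp only [map_sub, map_mul]
  ring

lemma genF_expand_add {n : ℕ} (C : Fin n → Fin n → ℂ) (x y : Fin n → ℂ) (c : ℂ) :
    genF C (fun p => x p + c * y p) (fun p => x p + c * y p)
      = genF C x x + c * genF C y x + (starRingEnd ℂ) c * genF C x y
        + (c * (starRingEnd ℂ) c) * genF C y y := by
  unfold genF
  simp only [Finset.mul_sum, ← Finset.sum_add_distrib]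
  refine Finset.sum_congr rfl fun i _ => ?_
  refine Finset.sum_congr rfl fun j _ => ?_
  simp only [map_add, map_mul]
  ring

lemma genF_neg {n : ℕ} (C : Fin n → Fin n → ℂ) (w z : Fin n → ℂ) :
    genF (fun i j => -(C i j)) w z = -genF C w z := by
  unfold genF
  simp [Finset.sum_neg_distrib]

lemma genF_cs {n : ℕ} (C : Fin n → Fin n → ℂ)
    (hherm : ∀ i j, (starRingEnd ℂ) (C i j) = C j i)
    (hpos : ∀ w : Fin n → ℂ, 0 ≤ (genF C w w).re) (w z : Fin n → ℂ) :
    norm (genF C w z) ^ 2 ≤ (genF C w w).re * (genF C z z).re := by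
  apply cs_abstract _ _ _ (hpos w) (hpos z)
  intro t
  have h1 := hpos (fun i => w i - t * z i)
  rw [genF_expand C w z t] at h1
  have hzw : genF C z w = (starRingEnd ℂ) (genF C w z) := by
    rw [genF_herm C hherm w z]
  have hzz : (genF C z z).im = 0 := by
    have h0 := genF_herm C hherm z z
    have h2 := congrArg Complex.im h0
    simp only [Complex.conj_im] at h2
    linarith
  rw [hzw] at h1
  have e1 : (genF C w w - (starRingEnd ℂ) t * genF C w z - t * (starRingEnd ℂ) (genF C w z)
        + (t * (starRingEnd ℂ) t) * genF C z z).re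
      = (genF C w w).re - 2 * ((starRingEnd ℂ) t * genF C w z).re
        + Complex.normSq t * (genF C z z).re := by
    have ht : t * (starRingEnd ℂ) t = ((Complex.normSq t : ℝ) : ℂ) := Complex.mul_conj t
    rw [ht]
    simp only [Complex.sub_re, Complex.add_re, Complex.mul_re, Complex.conj_re, Complex.conj_im,
      Complex.ofReal_re, Complex.ofReal_im, hzz]
    ring
  rw [e1] at h1
  linarith

lemma genF_basis {n : ℕ} (C : Fin n → Fin n → ℂ) (i j : Fin n) :
    genF C (fun p => if p = i then 1 else 0) (fun q => if q = j then 1 else 0) = C i j := by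
  unfold genF
  simp [apply_ite, Finset.sum_ite_eq', mul_ite, ite_mul]

lemma genF_diag_nonneg {n : ℕ} (C : Fin n → Fin n → ℂ)
    (hpos : ∀ w : Fin n → ℂ, 0 ≤ (genF C w w).re) (i : Fin n) : 0 ≤ (C i i).re := by
  have := hpos (fun p => if p = i then 1 else 0)
  rwa [genF_basis] at this

lemma genF_trace {n : ℕ} (C : Fin n → Fin n → ℂ)
    (hherm : ∀ i j, (starRingEnd ℂ) (C i j) = C j i)
    (hpos : ∀ w : Fin n → ℂ, 0 ≤ (genF C w w).re)
    (w : Fin n → ℂ) :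
    (genF C w w).re ≤ (∑ i, Complex.normSq (w i)) * (∑ i, (C i i).re) := by
  have hdiag : ∀ i, 0 ≤ (C i i).re := genF_diag_nonneg C hpos
  have hentry : ∀ i j, norm (C i j) ≤ Real.sqrt ((C i i).re) * Real.sqrt ((C j j).re) := by
    intro i j
    have h := genF_cs C hherm hpos (fun p => if p = i then 1 else 0) (fun q => if q = j then 1 else 0)
    rw [genF_basis, genF_basis, genF_basis] at h
    rw [← Real.sqrt_mul (hdiag i)]
    exact (Real.le_sqrt (norm_nonneg _) (mul_nonneg (hdiag i) (hdiag j))).2 h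
  have step1 : (genF C w w).re ≤ ∑ i, ∑ j, (Real.sqrt ((C i i).re) * norm (w i)) *
      (Real.sqrt ((C j j).re) * norm (w j)) := by
    unfold genF
    rw [Complex.re_sum]
    apply Finset.sum_le_sum
    intro i _
    rw [Complex.re_sum]
    apply Finset.sum_le_sum
    intro j _
    calc (C i j * w i * (starRingEnd ℂ) (w j)).re
        ≤ norm (C i j * w i * (starRingEnd ℂ) (w j)) := Complex.re_le_norm _
      _ = norm (C i j) * norm (w i) * norm (w j) := by
          simp [map_mul]
      _ ≤ (Real.sqrt ((C i i).re) * norm (w i)) *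
      (Real.sqrt ((C j j).re) * norm (w j)) := by
          have h3 := hentry i j
          have h1 := norm_nonneg (w i)
          have h2 := norm_nonneg (w j)
          nlinarith [mul_le_mul_of_nonneg_right (mul_le_mul_of_nonneg_right h3 h1) h2]
  have step2 : ∑ i, ∑ j, (Real.sqrt ((C i i).re) * norm (w i)) *
      (Real.sqrt ((C j j).re) * norm (w j))
      = (∑ i, norm (w i) * Real.sqrt ((C i i).re)) ^ 2 := by
    rw [sq, Finset.sum_mul_sum]
    exact Finset.sum_congr rfl fun i _ => Finset.sum_congr rfl fun j _ => by ring
  have step3 : (∑ i, norm (w i) * Real.sqrt ((C i i).re)) ^ 2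
      ≤ (∑ i, norm (w i) ^ 2) * (∑ i, Real.sqrt ((C i i).re) ^ 2) :=
    Finset.sum_mul_sq_le_sq_mul_sq _ _ _
  have step4 : (∑ i, norm (w i) ^ 2) = ∑ i, Complex.normSq (w i) :=
    Finset.sum_congr rfl fun i _ => Complex.sq_norm _
  have step5 : (∑ i, Real.sqrt ((C i i).re) ^ 2) = ∑ i, (C i i).re :=
    Finset.sum_congr rfl fun i _ => Real.sq_sqrt (hdiag i)
  rw [step4, step5] at step3
  linarith [step1, step2 ▸ step1]

lemma sum4_swap {n : ℕ} (f : Fin n → Fin n → Fin n → Fin n → ℂ) :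
    ∑ i, ∑ j, ∑ k, ∑ l, f i j k l = ∑ k, ∑ l, ∑ i, ∑ j, f i j k l := by
  calc ∑ i, ∑ j, ∑ k, ∑ l, f i j k l
      = ∑ i, ∑ k, ∑ j, ∑ l, f i j k l :=
        Finset.sum_congr rfl fun i _ => Finset.sum_comm
    _ = ∑ i, ∑ k, ∑ l, ∑ j, f i j k l :=
        Finset.sum_congr rfl fun i _ => Finset.sum_congr rfl fun k _ => Finset.sum_comm
    _ = ∑ k, ∑ i, ∑ l, ∑ j, f i j k l := Finset.sum_comm
    _ = ∑ k, ∑ l, ∑ i, ∑ j, f i j k l :=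
        Finset.sum_congr rfl fun k _ => Finset.sum_comm

lemma quad_first {n : ℕ} (R : Fin n → Fin n → Fin n → Fin n → ℂ)
    (w z x y : EuclideanSpace ℂ (Fin n)) :
    chernQuad R w z x y
      = genF (fun i j => ∑ p, ∑ q, R i j p q * x p * (starRingEnd ℂ) (y q))
          (fun i => w i) (fun j => z j) := by
  unfold chernQuad genF
  refine Finset.sum_congr rfl fun i _ => Finset.sum_congr rfl fun j _ => ?_
  simp only [Finset.sum_mul]
  refine Finset.sum_congr rfl fun p _ => Finset.sum_congr rfl fun q _ => ?_
  ring

lemma quad_last {n : ℕ} (R : Fin n → Fin n → Fin n → Fin n → ℂ)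
    (u v x y : EuclideanSpace ℂ (Fin n)) :
    chernQuad R u v x y
      = genF (fun p q => ∑ i, ∑ j, R i j p q * u i * (starRingEnd ℂ) (v j))
          (fun p => x p) (fun q => y q) := by
  unfold chernQuad genF
  rw [sum4_swap]
  simp only [Finset.sum_mul]

lemma chernB_conj {n : ℕ} (i j p q : Fin n) :
    (starRingEnd ℂ) (chernB i j p q) = chernB j i q p := by
  unfold chernB
  simp only [map_add, map_mul, apply_ite (starRingEnd ℂ), map_one, map_zero]
  have h1 : (if i = j then (1:ℂ) else 0) = if j = i then 1 else 0 := by simp [eq_comm]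
  have h2 : (if p = q then (1:ℂ) else 0) = if q = p then 1 else 0 := by simp [eq_comm]
  have h3 : (if i = q then (1:ℂ) else 0) = if q = i then 1 else 0 := by simp [eq_comm]
  have h4 : (if p = j then (1:ℂ) else 0) = if j = p then 1 else 0 := by simp [eq_comm]
  rw [h1, h2, h3, h4]
  ring

lemma quad_subB {n : ℕ} (R : Fin n → Fin n → Fin n → Fin n → ℂ) (c : ℂ)
    (u v x y : EuclideanSpace ℂ (Fin n)) :
    chernQuad (fun i j p q => R i j p q - c * chernB i j p q) u v x y
      = chernQuad R u v x y - c * chernQuad (fun i j p q => chernB i j p q) u v x y := by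
  unfold chernQuad
  simp only [Finset.mul_sum, ← Finset.sum_sub_distrib]
  refine Finset.sum_congr rfl fun i _ => Finset.sum_congr rfl fun j _ =>
    Finset.sum_congr rfl fun p _ => Finset.sum_congr rfl fun q _ => ?_
  ring

lemma quadB_re_nonneg {n : ℕ} (X Y : EuclideanSpace ℂ (Fin n)) :
    0 ≤ (chernQuad (fun i j p q => chernB i j p q) X X Y Y).re := by
  have key : chernQuad (fun i j p q => chernB i j p q) X X Y Y
      = (∑ i, X i * (starRingEnd ℂ) (X i)) * (∑ p, Y p * (starRingEnd ℂ) (Y p))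
        + (∑ i, X i * (starRingEnd ℂ) (Y i)) * (∑ p, Y p * (starRingEnd ℂ) (X p)) := by
    unfold chernQuad chernB
    simp only [add_mul, mul_ite, ite_mul, one_mul, mul_one, zero_mul, mul_zero,
      Finset.sum_add_distrib, Finset.sum_ite_irrel, Finset.sum_const_zero,
      Finset.sum_ite_eq, Finset.sum_ite_eq', Finset.mem_univ, if_true]
    rw [Finset.sum_mul_sum, Finset.sum_mul_sum]
    congr 1 <;>
      exact Finset.sum_congr rfl fun i _ => Finset.sum_congr rfl fun j _ => by ring
  rw [key]
  have h1 : (∑ i, X i * (starRingEnd ℂ) (X i)) = ((∑ i, Complex.normSq (X i) : ℝ) : ℂ) := by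
    push_cast
    exact Finset.sum_congr rfl fun i _ => Complex.mul_conj (X i)
  have h2 : (∑ p, Y p * (starRingEnd ℂ) (Y p)) = ((∑ p, Complex.normSq (Y p) : ℝ) : ℂ) := by
    push_cast
    exact Finset.sum_congr rfl fun i _ => Complex.mul_conj (Y i)
  have hz : (∑ p, Y p * (starRingEnd ℂ) (X p))
      = (starRingEnd ℂ) (∑ i, X i * (starRingEnd ℂ) (Y i)) := by
    rw [map_sum]
    refine Finset.sum_congr rfl fun i _ => ?_
    rw [map_mul, Complex.conj_conj]
    ring
  rw [h1, h2, hz, Complex.mul_conj]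
  rw [Complex.add_re, ← Complex.ofReal_mul, Complex.ofReal_re, Complex.ofReal_re]
  have h0 := Complex.normSq_nonneg (∑ i, X i * (starRingEnd ℂ) (Y i))
  have hX : 0 ≤ ∑ i, Complex.normSq (X i) := Finset.sum_nonneg fun i _ => Complex.normSq_nonneg _
  have hY : 0 ≤ ∑ p, Complex.normSq (Y p) := Finset.sum_nonneg fun i _ => Complex.normSq_nonneg _
  nlinarith

lemma Dherm {n : ℕ} (R' : Fin n → Fin n → Fin n → Fin n → ℂ)
    (hsym' : ∀ i j p q, (starRingEnd ℂ) (R' i j p q) = R' j i q p)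
    (u : Fin n → ℂ) (p q : Fin n) :
    (starRingEnd ℂ) (∑ i, ∑ j, R' i j p q * u i * (starRingEnd ℂ) (u j))
      = ∑ i, ∑ j, R' i j q p * u i * (starRingEnd ℂ) (u j) := by
  rw [map_sum, Finset.sum_comm]
  refine Finset.sum_congr rfl fun j _ => ?_
  rw [map_sum]
  refine Finset.sum_congr rfl fun i _ => ?_
  rw [map_mul, map_mul, hsym', Complex.conj_conj]
  ring

lemma Eherm {n : ℕ} (R' : Fin n → Fin n → Fin n → Fin n → ℂ)
    (hsym' : ∀ i j p q, (starRingEnd ℂ) (R' i j p q) = R' j i q p)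
    (x : Fin n → ℂ) (i j : Fin n) :
    (starRingEnd ℂ) (∑ p, ∑ q, R' i j p q * x p * (starRingEnd ℂ) (x q))
      = ∑ p, ∑ q, R' j i p q * x p * (starRingEnd ℂ) (x q) := by
  rw [map_sum, Finset.sum_comm]
  refine Finset.sum_congr rfl fun q _ => ?_
  rw [map_sum]
  refine Finset.sum_congr rfl fun p _ => ?_
  rw [map_mul, map_mul, hsym', Complex.conj_conj]
  ring

lemma ric_eq {n : ℕ} (R' : Fin n → Fin n → Fin n → Fin n → ℂ)
    (u : EuclideanSpace ℂ (Fin n)) :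
    chernRic R' u = ∑ p, (∑ i, ∑ j, R' i j p p * u i * (starRingEnd ℂ) (u j)).re := by
  unfold chernRic
  rw [Complex.re_sum]
  refine Finset.sum_congr rfl fun p _ => ?_
  rw [quad_last]
  have hfun : (fun q => (EuclideanSpace.single p (1:ℂ)) q) = (fun q => if q = p then 1 else 0) :=
    funext fun q => EuclideanSpace.single_apply p 1 q
  rw [hfun, genF_basis]


lemma quad_first' {n : ℕ} (R : Fin n → Fin n → Fin n → Fin n → ℂ)
    (w z x y : Fin n → ℂ) :
    chernQuad R (WithLp.toLp 2 w) (WithLp.toLp 2 z) (WithLp.toLp 2 x) (WithLp.toLp 2 y)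
      = genF (fun i j => ∑ p, ∑ q, R i j p q * x p * (starRingEnd ℂ) (y q)) w z := by
  unfold chernQuad genF
  refine Finset.sum_congr rfl fun i _ => Finset.sum_congr rfl fun j _ => ?_
  simp only [Finset.sum_mul]
  refine Finset.sum_congr rfl fun p _ => Finset.sum_congr rfl fun q _ => ?_
  ring

lemma quad_last' {n : ℕ} (R : Fin n → Fin n → Fin n → Fin n → ℂ)
    (u v x y : Fin n → ℂ) :
    chernQuad R (WithLp.toLp 2 u) (WithLp.toLp 2 v) (WithLp.toLp 2 x) (WithLp.toLp 2 y)
      = genF (fun p q => ∑ i, ∑ j, R i j p q * u i * (starRingEnd ℂ) (v j)) x y := by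
  unfold chernQuad genF
  rw [sum4_swap]
  simp only [Finset.sum_mul]


lemma abs4 (a b c d : ℂ) :
    norm (a + b - c - d)
      ≤ norm a + norm b + norm c + norm d := by
  simp only [sub_eq_add_neg]
  calc ‖a + b + -c + -d‖ ≤ ‖a + b + -c‖ + ‖-d‖ := norm_add_le _ _
    _ ≤ ‖a + b‖ + ‖-c‖ + ‖-d‖ := by gcongr; exact norm_add_le _ _
    _ ≤ ‖a‖ + ‖b‖ + ‖-c‖ + ‖-d‖ := by gcongr; exact norm_add_le _ _
    _ = ‖a‖ + ‖b‖ + ‖c‖ + ‖d‖ := by rw [norm_neg, norm_neg]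

lemma cs_four (a0 a1 a2 a3 b0 b1 b2 b3 : ℝ)
    (ha0 : 0 ≤ a0) (ha1 : 0 ≤ a1) (ha2 : 0 ≤ a2) (ha3 : 0 ≤ a3)
    (hb0 : 0 ≤ b0) (hb1 : 0 ≤ b1) (hb2 : 0 ≤ b2) (hb3 : 0 ≤ b3) :
    (Real.sqrt a0 * Real.sqrt b0 + Real.sqrt a1 * Real.sqrt b1
      + Real.sqrt a2 * Real.sqrt b2 + Real.sqrt a3 * Real.sqrt b3) ^ 2
      ≤ (a0 + a1 + a2 + a3) * (b0 + b1 + b2 + b3) := by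
  have h := Finset.sum_mul_sq_le_sq_mul_sq Finset.univ
      (fun m : Fin 4 => Real.sqrt (![a0, a1, a2, a3] m))
      (fun m : Fin 4 => Real.sqrt (![b0, b1, b2, b3] m))
  simp only [Fin.sum_univ_four, Matrix.cons_val_zero, Matrix.cons_val_one, Matrix.head_cons,
    Matrix.cons_val_two, Matrix.tail_cons, Matrix.cons_val_three] at h
  rw [Real.sq_sqrt ha0, Real.sq_sqrt ha1, Real.sq_sqrt ha2, Real.sq_sqrt ha3,
    Real.sq_sqrt hb0, Real.sq_sqrt hb1, Real.sq_sqrt hb2, Real.sq_sqrt hb3] at h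
  exact h

set_option maxHeartbeats 1600000 in
theorem polarization_ricci_eps {n : ℕ} (hn : 1 ≤ n)
    (R : Fin n → Fin n → Fin n → Fin n → ℂ)
    (hsym : ∀ i j k l, (starRingEnd ℂ) (R i j k l) = R j i l k)
    (hGriffiths : ∀ X Y : EuclideanSpace ℂ (Fin n), (chernQuad R X X Y Y).re ≤ 0)
    (ε : ℝ) (hε : 0 ≤ ε)
    (u v k l : EuclideanSpace ℂ (Fin n)) (hk : ‖k‖ = 1) (hl : ‖l‖ = 1) :
    ‖chernQuad (fun i j p q => R i j p q - ε * chernB i j p q) u v k l‖ ^ 2 ≤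
      4 * (chernRic (fun i j p q => R i j p q - ε * chernB i j p q) u *
        chernRic (fun i j p q => R i j p q - ε * chernB i j p q) v) := by
  set R' : Fin n → Fin n → Fin n → Fin n → ℂ :=
    fun i j p q => R i j p q - (ε : ℂ) * chernB i j p q with hR'
  have hsym' : ∀ i j p q, (starRingEnd ℂ) (R' i j p q) = R' j i q p := by
    intro i j p q
    rw [hR']
    simp only
    rw [map_sub, map_mul, Complex.conj_ofReal, hsym, chernB_conj]
  have hG' : ∀ X Y : EuclideanSpace ℂ (Fin n), (chernQuad R' X X Y Y).re ≤ 0 := by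
    intro X Y
    rw [hR', quad_subB, Complex.sub_re, Complex.re_ofReal_mul]
    have h1 := hGriffiths X Y
    have h2 := quadB_re_nonneg X Y
    nlinarith
  -- contractions
  set Duv : Fin n → Fin n → ℂ :=
    fun p q => ∑ i, ∑ j, R' i j p q * u i * (starRingEnd ℂ) (v j) with hDuv
  set Cu : Fin n → Fin n → ℂ :=
    fun p q => -(∑ i, ∑ j, R' i j p q * u i * (starRingEnd ℂ) (u j)) with hCu
  set Cv : Fin n → Fin n → ℂ :=
    fun p q => -(∑ i, ∑ j, R' i j p q * v i * (starRingEnd ℂ) (v j)) with hCv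
  have hDuv_quad : ∀ x y : Fin n → ℂ, genF Duv x y = chernQuad R' u v (WithLp.toLp 2 x) (WithLp.toLp 2 y) := by
    intro x y
    rw [quad_last' R' u v x y, hDuv]
  have hCu_quad : ∀ x y : Fin n → ℂ, genF Cu x y = -chernQuad R' u u (WithLp.toLp 2 x) (WithLp.toLp 2 y) := by
    intro x y
    rw [hCu, genF_neg, quad_last' R' u u x y]
  have hCv_quad : ∀ x y : Fin n → ℂ, genF Cv x y = -chernQuad R' v v (WithLp.toLp 2 x) (WithLp.toLp 2 y) := by
    intro x y
    rw [hCv, genF_neg, quad_last' R' v v x y]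
  have hposCu : ∀ w : Fin n → ℂ, 0 ≤ (genF Cu w w).re := by
    intro w
    rw [hCu_quad w w, Complex.neg_re]
    linarith [hG' u (WithLp.toLp 2 w)]
  have hposCv : ∀ w : Fin n → ℂ, 0 ≤ (genF Cv w w).re := by
    intro w
    rw [hCv_quad w w, Complex.neg_re]
    linarith [hG' v (WithLp.toLp 2 w)]
  have hhermCu : ∀ p q, (starRingEnd ℂ) (Cu p q) = Cu q p := by
    intro p q
    rw [hCu]
    simp only
    rw [map_neg, Dherm R' hsym' (fun i => u i) p q]
  have hhermCv : ∀ p q, (starRingEnd ℂ) (Cv p q) = Cv q p := by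
    intro p q
    rw [hCv]
    simp only
    rw [map_neg, Dherm R' hsym' (fun i => v i) p q]
  -- diagonal Cauchy–Schwarz in the first pair of slots
  have hdcs : ∀ x : Fin n → ℂ,
      norm (genF Duv x x) ^ 2 ≤ (genF Cu x x).re * (genF Cv x x).re := by
    intro x
    set E : Fin n → Fin n → ℂ :=
      fun i j => -(∑ p, ∑ q, R' i j p q * x p * (starRingEnd ℂ) (x q)) with hE
    have hEq : ∀ w z : Fin n → ℂ, genF E w z = -chernQuad R' (WithLp.toLp 2 w) (WithLp.toLp 2 z) (WithLp.toLp 2 x) (WithLp.toLp 2 x) := by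
      intro w z
      rw [hE, genF_neg, quad_first' R' w z x x]
    have hermE : ∀ i j, (starRingEnd ℂ) (E i j) = E j i := by
      intro i j
      rw [hE]
      simp only
      rw [map_neg, Eherm R' hsym' x i j]
    have posE : ∀ w : Fin n → ℂ, 0 ≤ (genF E w w).re := by
      intro w
      rw [hEq w w, Complex.neg_re]
      linarith [hG' (WithLp.toLp 2 w) (WithLp.toLp 2 x)]
    have h := genF_cs E hermE posE u v
    rw [hEq u v, hEq u u, hEq v v] at h
    rw [hDuv_quad x x, hCu_quad x x, hCv_quad x x]
    rwa [norm_neg] at h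
  -- trace bounds
  have htru : ∀ w : Fin n → ℂ,
      (genF Cu w w).re ≤ (∑ i, Complex.normSq (w i)) * (∑ p, (Cu p p).re) :=
    genF_trace Cu hhermCu hposCu
  have htrv : ∀ w : Fin n → ℂ,
      (genF Cv w w).re ≤ (∑ i, Complex.normSq (w i)) * (∑ p, (Cv p p).re) :=
    genF_trace Cv hhermCv hposCv
  have hA : 0 ≤ ∑ p, (Cu p p).re :=
    Finset.sum_nonneg fun p _ => genF_diag_nonneg Cu hposCu p
  have hB : 0 ≤ ∑ p, (Cv p p).re :=
    Finset.sum_nonneg fun p _ => genF_diag_nonneg Cv hposCv p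
  -- unit norms
  have hnorm : ∀ z : ℂ, Complex.normSq z = ‖z‖ ^ 2 := by
    intro z
    rw [Complex.normSq_eq_norm_sq]
  have hk2 : (∑ i, Complex.normSq (k i)) = 1 := by
    have h1 : Real.sqrt (∑ i, ‖k i‖ ^ 2) = 1 := by rw [← EuclideanSpace.norm_eq, hk]
    have h3 : 0 ≤ ∑ i, ‖k i‖ ^ 2 := Finset.sum_nonneg fun i _ => sq_nonneg _
    have h2 : ∑ i, ‖k i‖ ^ 2 = 1 := by nlinarith [Real.sq_sqrt h3]
    rw [← h2]
    exact Finset.sum_congr rfl fun i _ => hnorm (k i)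
  have hl2 : (∑ i, Complex.normSq (l i)) = 1 := by
    have h1 : Real.sqrt (∑ i, ‖l i‖ ^ 2) = 1 := by rw [← EuclideanSpace.norm_eq, hl]
    have h3 : 0 ≤ ∑ i, ‖l i‖ ^ 2 := Finset.sum_nonneg fun i _ => sq_nonneg _
    have h2 : ∑ i, ‖l i‖ ^ 2 = 1 := by nlinarith [Real.sq_sqrt h3]
    rw [← h2]
    exact Finset.sum_congr rfl fun i _ => hnorm (l i)
  have hQuk : (genF Cu k k).re ≤ ∑ p, (Cu p p).re := by
    have := htru k
    rwa [hk2, one_mul] at this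
  have hQul : (genF Cu l l).re ≤ ∑ p, (Cu p p).re := by
    have := htru l
    rwa [hl2, one_mul] at this
  have hQvk : (genF Cv k k).re ≤ ∑ p, (Cv p p).re := by
    have := htrv k
    rwa [hk2, one_mul] at this
  have hQvl : (genF Cv l l).re ≤ ∑ p, (Cv p p).re := by
    have := htrv l
    rwa [hl2, one_mul] at this
  -- Ricci identification
  have hricu : chernRic R' u = -∑ p, (Cu p p).re := by
    rw [ric_eq R' u, hCu]
    simp only [Complex.neg_re, Finset.sum_neg_distrib, neg_neg]
  have hricv : chernRic R' v = -∑ p, (Cv p p).re := by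
    rw [ric_eq R' v, hCv]
    simp only [Complex.neg_re, Finset.sum_neg_distrib, neg_neg]
  -- polarization
  have e0 := genF_expand_add Duv k l 1
  have e1 := genF_expand_add Duv k l Complex.I
  have e2 := genF_expand_add Duv k l (-1)
  have e3 := genF_expand_add Duv k l (-Complex.I)
  simp only [Complex.conj_I, map_one, map_neg] at e0 e1 e2 e3
  have pol : genF Duv (fun p => k p + 1 * l p) (fun p => k p + 1 * l p)
      + Complex.I * genF Duv (fun p => k p + Complex.I * l p) (fun p => k p + Complex.I * l p)
      - genF Duv (fun p => k p + (-1) * l p) (fun p => k p + (-1) * l p)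
      - Complex.I * genF Duv (fun p => k p + (-Complex.I) * l p)
          (fun p => k p + (-Complex.I) * l p)
      = 4 * genF Duv k l := by
    have hI : (Complex.I : ℂ) ^ 2 = -1 := Complex.I_sq
    linear_combination e0 + Complex.I * e1 - e2 - Complex.I * e3
      + 2 * (genF Duv l k - genF Duv k l) * hI
  have f0 := genF_expand_add Cu k l 1
  have f1 := genF_expand_add Cu k l Complex.I
  have f2 := genF_expand_add Cu k l (-1)
  have f3 := genF_expand_add Cu k l (-Complex.I)
  simp only [Complex.conj_I, map_one, map_neg] at f0 f1 f2 f3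
  have sumu : genF Cu (fun p => k p + 1 * l p) (fun p => k p + 1 * l p)
      + genF Cu (fun p => k p + Complex.I * l p) (fun p => k p + Complex.I * l p)
      + genF Cu (fun p => k p + (-1) * l p) (fun p => k p + (-1) * l p)
      + genF Cu (fun p => k p + (-Complex.I) * l p) (fun p => k p + (-Complex.I) * l p)
      = 4 * genF Cu k k + 4 * genF Cu l l := by
    have hI : (Complex.I : ℂ) ^ 2 = -1 := Complex.I_sq
    linear_combination f0 + f1 + f2 + f3 - 2 * genF Cu l l * hI
  have g0 := genF_expand_add Cv k l 1
  have g1 := genF_expand_add Cv k l Complex.I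
  have g2 := genF_expand_add Cv k l (-1)
  have g3 := genF_expand_add Cv k l (-Complex.I)
  simp only [Complex.conj_I, map_one, map_neg] at g0 g1 g2 g3
  have sumv : genF Cv (fun p => k p + 1 * l p) (fun p => k p + 1 * l p)
      + genF Cv (fun p => k p + Complex.I * l p) (fun p => k p + Complex.I * l p)
      + genF Cv (fun p => k p + (-1) * l p) (fun p => k p + (-1) * l p)
      + genF Cv (fun p => k p + (-Complex.I) * l p) (fun p => k p + (-Complex.I) * l p)
      = 4 * genF Cv k k + 4 * genF Cv l l := by
    have hI : (Complex.I : ℂ) ^ 2 = -1 := Complex.I_sq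
    linear_combination g0 + g1 + g2 + g3 - 2 * genF Cv l l * hI
  have sumu' : (genF Cu (fun p => k p + 1 * l p) (fun p => k p + 1 * l p)).re
      + (genF Cu (fun p => k p + Complex.I * l p) (fun p => k p + Complex.I * l p)).re
      + (genF Cu (fun p => k p + (-1) * l p) (fun p => k p + (-1) * l p)).re
      + (genF Cu (fun p => k p + (-Complex.I) * l p) (fun p => k p + (-Complex.I) * l p)).re
      ≤ 8 * (∑ p, (Cu p p).re) := by
    have h := congrArg Complex.re sumu
    simp only [Complex.add_re, Complex.mul_re, Complex.re_ofNat, Complex.im_ofNat,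
      zero_mul, sub_zero] at h
    linarith
  have sumv' : (genF Cv (fun p => k p + 1 * l p) (fun p => k p + 1 * l p)).re
      + (genF Cv (fun p => k p + Complex.I * l p) (fun p => k p + Complex.I * l p)).re
      + (genF Cv (fun p => k p + (-1) * l p) (fun p => k p + (-1) * l p)).re
      + (genF Cv (fun p => k p + (-Complex.I) * l p) (fun p => k p + (-Complex.I) * l p)).re
      ≤ 8 * (∑ p, (Cv p p).re) := by
    have h := congrArg Complex.re sumv
    simp only [Complex.add_re, Complex.mul_re, Complex.re_ofNat, Complex.im_ofNat,
      zero_mul, sub_zero] at h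
    linarith
  -- per-vector diagonal bound with square roots
  have hs : ∀ x : Fin n → ℂ, norm (genF Duv x x)
      ≤ Real.sqrt ((genF Cu x x).re) * Real.sqrt ((genF Cv x x).re) := by
    intro x
    rw [← Real.sqrt_mul (hposCu x)]
    exact (Real.le_sqrt (norm_nonneg _) (mul_nonneg (hposCu x) (hposCv x))).2 (hdcs x)
  -- triangle inequality
  have habs : 4 * norm (genF Duv k l)
      ≤ norm (genF Duv (fun p => k p + 1 * l p) (fun p => k p + 1 * l p))
      + norm (genF Duv (fun p => k p + Complex.I * l p) (fun p => k p + Complex.I * l p))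
      + norm (genF Duv (fun p => k p + (-1) * l p) (fun p => k p + (-1) * l p))
      + norm (genF Duv (fun p => k p + (-Complex.I) * l p)
          (fun p => k p + (-Complex.I) * l p)) := by
    have h1 : 4 * norm (genF Duv k l) = norm (4 * genF Duv k l) := by
      rw [norm_mul]
      norm_num
    rw [h1, ← pol]
    refine le_trans (abs4 _ _ _ _) ?_
    simp only [norm_mul, Complex.norm_I, one_mul]
    exact le_refl _
  -- combine
  set Qu0 := (genF Cu (fun p => k p + 1 * l p) (fun p => k p + 1 * l p)).re
  set Qu1 := (genF Cu (fun p => k p + Complex.I * l p) (fun p => k p + Complex.I * l p)).re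
  set Qu2 := (genF Cu (fun p => k p + (-1) * l p) (fun p => k p + (-1) * l p)).re
  set Qu3 := (genF Cu (fun p => k p + (-Complex.I) * l p)
      (fun p => k p + (-Complex.I) * l p)).re
  set Qv0 := (genF Cv (fun p => k p + 1 * l p) (fun p => k p + 1 * l p)).re
  set Qv1 := (genF Cv (fun p => k p + Complex.I * l p) (fun p => k p + Complex.I * l p)).re
  set Qv2 := (genF Cv (fun p => k p + (-1) * l p) (fun p => k p + (-1) * l p)).re
  set Qv3 := (genF Cv (fun p => k p + (-Complex.I) * l p)
      (fun p => k p + (-Complex.I) * l p)).re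
  have hcs4 := cs_four Qu0 Qu1 Qu2 Qu3 Qv0 Qv1 Qv2 Qv3
    (hposCu _) (hposCu _) (hposCu _) (hposCu _)
    (hposCv _) (hposCv _) (hposCv _) (hposCv _)
  have hsum4 : norm (genF Duv (fun p => k p + 1 * l p) (fun p => k p + 1 * l p))
      + norm (genF Duv (fun p => k p + Complex.I * l p) (fun p => k p + Complex.I * l p))
      + norm (genF Duv (fun p => k p + (-1) * l p) (fun p => k p + (-1) * l p))
      + norm (genF Duv (fun p => k p + (-Complex.I) * l p)
          (fun p => k p + (-Complex.I) * l p))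
      ≤ Real.sqrt Qu0 * Real.sqrt Qv0 + Real.sqrt Qu1 * Real.sqrt Qv1
        + Real.sqrt Qu2 * Real.sqrt Qv2 + Real.sqrt Qu3 * Real.sqrt Qv3 := by
    have h0 := hs (fun p => k p + 1 * l p)
    have h1 := hs (fun p => k p + Complex.I * l p)
    have h2 := hs (fun p => k p + (-1) * l p)
    have h3 := hs (fun p => k p + (-Complex.I) * l p)
    linarith
  have hQAB : (Qu0 + Qu1 + Qu2 + Qu3) * (Qv0 + Qv1 + Qv2 + Qv3)
      ≤ (8 * (∑ p, (Cu p p).re)) * (8 * (∑ p, (Cv p p).re)) := by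
    have hq : 0 ≤ Qv0 + Qv1 + Qv2 + Qv3 := by
      have := hposCv (fun p => k p + 1 * l p)
      have := hposCv (fun p => k p + Complex.I * l p)
      have := hposCv (fun p => k p + (-1) * l p)
      have := hposCv (fun p => k p + (-Complex.I) * l p)
      linarith
    have h8 : 0 ≤ 8 * (∑ p, (Cu p p).re) := by linarith
    exact mul_le_mul sumu' sumv' hq h8
  have hfin : (4 * norm (genF Duv k l)) ^ 2
      ≤ (8 * (∑ p, (Cu p p).re)) * (8 * (∑ p, (Cv p p).re)) := by
    have ht : 0 ≤ 4 * norm (genF Duv k l) := by positivity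
    have hstep : 4 * norm (genF Duv k l)
        ≤ Real.sqrt Qu0 * Real.sqrt Qv0 + Real.sqrt Qu1 * Real.sqrt Qv1
          + Real.sqrt Qu2 * Real.sqrt Qv2 + Real.sqrt Qu3 * Real.sqrt Qv3 :=
      le_trans habs hsum4
    calc (4 * norm (genF Duv k l)) ^ 2
        ≤ (Real.sqrt Qu0 * Real.sqrt Qv0 + Real.sqrt Qu1 * Real.sqrt Qv1
          + Real.sqrt Qu2 * Real.sqrt Qv2 + Real.sqrt Qu3 * Real.sqrt Qv3) ^ 2 :=
          pow_le_pow_left₀ ht hstep 2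
      _ ≤ (Qu0 + Qu1 + Qu2 + Qu3) * (Qv0 + Qv1 + Qv2 + Qv3) := hcs4
      _ ≤ _ := hQAB
  rw [← hDuv_quad k l, hricu, hricv]
  have hexp : (4 * norm (genF Duv k l)) ^ 2 = 16 * norm (genF Duv k l) ^ 2 := by
    ring
  rw [hexp] at hfin
  nlinarith [hfin]
end

section
/- Let K > 0, c > 0, T > 0 and let f : ℝ → ℝ and f' : ℝ → ℝ be such that for every t ∈ [0,T]: f has derivative f'(t) at t within [0,T] (HasDerivWithinAt f (f' t) (Set.Icc 0 T) t), f(t) ≥ 0, and f'(t) ≤ 2c·(f t)^{3/2}. If f(0) ≤ K², then for every t ∈ [0,T] with t < 1/(c·K) one has f(t) ≤ (K⁻¹ − c·t)⁻². -/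
/-! The bound is the solution of `y' = 2 c y ^ (3/2)`, `y 0 = K²`. The same solution with `c`
replaced by a slightly larger `c'` is a strict supersolution, which `f` cannot cross (the fencing
theorem); letting `c' ↓ c` gives the bound. -/

open Real Set Filter Topology

/-- The solution of `y' = 2 c y ^ (3/2)`, `y 0 = a⁻²`, which blows up at `t = a / c`. -/
noncomputable def blowUpSolution (a c t : ℝ) : ℝ := ((a - c * t) ^ 2)⁻¹

lemma inv_sq_rpow_three_halves {u : ℝ} (hu : 0 ≤ u) : ((u ^ 2)⁻¹) ^ ((3 : ℝ) / 2) = (u ^ 3)⁻¹ := by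
  rw [inv_rpow (by positivity), ← rpow_natCast_mul hu]
  norm_num

lemma hasDerivAt_blowUpSolution {a c t : ℝ} (ht : 0 < a - c * t) :
    HasDerivAt (blowUpSolution a c) (2 * c * blowUpSolution a c t ^ ((3 : ℝ) / 2)) t := by
  have hlin : HasDerivAt (fun s => a - c * s) (-c) t := by
    simpa using ((hasDerivAt_id t).const_mul c).const_sub a
  refine ((hlin.fun_pow 2).inv (by positivity)).congr_deriv ?_
  rw [blowUpSolution, inv_sq_rpow_three_halves ht.le]
  field_simp
  ring

lemma blowUpSolution_pos {a c t : ℝ} (ht : 0 < a - c * t) : 0 < blowUpSolution a c t := by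
  unfold blowUpSolution
  positivity

/-- At a contact point `f x = B x`, `f' x ≤ 2 c B ^ (3/2) < 2 c' B ^ (3/2) = B' x`. -/
lemma le_blowUpSolution_of_lt {f f' : ℝ → ℝ} {a c c' t : ℝ} (ht : 0 ≤ t)
    (hderiv : ∀ x ∈ Icc 0 t, HasDerivWithinAt f (f' x) (Icc 0 t) x)
    (hineq : ∀ x ∈ Icc 0 t, f' x ≤ 2 * c * f x ^ ((3 : ℝ) / 2))
    (h0 : f 0 ≤ blowUpSolution a c' 0) (ha : 0 < a) (hcc' : c < c') (hc't : 0 < a - c' * t) :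
    f t ≤ blowUpSolution a c' t := by
  have hpos : ∀ x ∈ Icc 0 t, 0 < a - c' * x := fun x hx => by
    rcases le_total 0 c' with h | h <;> nlinarith [hx.1, hx.2]
  refine image_le_of_deriv_right_lt_deriv_boundary'
    (fun x hx => (hderiv x hx).continuousWithinAt)
    (fun x hx => (hderiv x (Ico_subset_Icc_self hx)).mono_of_mem_nhdsWithin
      (Icc_mem_nhdsGE_of_mem hx))
    h0
    (fun x hx => (hasDerivAt_blowUpSolution (hpos x hx)).continuousAt.continuousWithinAt)
    (fun x hx => (hasDerivAt_blowUpSolution (hpos x (Ico_subset_Icc_self hx))).hasDerivWithinAt)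
    ?_ (right_mem_Icc.2 ht)
  intro x hx hfx
  have hx' := Ico_subset_Icc_self hx
  have hB := blowUpSolution_pos (hpos x hx')
  calc f' x ≤ 2 * c * blowUpSolution a c' x ^ ((3 : ℝ) / 2) := hfx ▸ hineq x hx'
    _ < 2 * c' * blowUpSolution a c' x ^ ((3 : ℝ) / 2) := by gcongr

lemma le_blowUpSolution {f f' : ℝ → ℝ} {a c t : ℝ} (ht : 0 ≤ t)
    (hderiv : ∀ x ∈ Icc 0 t, HasDerivWithinAt f (f' x) (Icc 0 t) x)
    (hineq : ∀ x ∈ Icc 0 t, f' x ≤ 2 * c * f x ^ ((3 : ℝ) / 2))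
    (h0 : f 0 ≤ blowUpSolution a c 0) (ha : 0 < a) (hct : 0 < a - c * t) :
    f t ≤ blowUpSolution a c t := by
  have hlin : Continuous fun c' => a - c' * t := by fun_prop
  have hcont : ContinuousAt (fun c' => blowUpSolution a c' t) c :=
    (hlin.continuousAt.pow 2).inv₀ (pow_pos hct 2).ne'
  have hpos : ∀ᶠ c' in 𝓝[>] c, 0 < a - c' * t :=
    eventually_nhdsWithin_of_eventually_nhds
      (continuousAt_const.eventually_lt hlin.continuousAt hct)
  refine ge_of_tendsto (hcont.tendsto.mono_left (nhdsWithin_le_nhds (s := Ioi c))) ?_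
  filter_upwards [self_mem_nhdsWithin, hpos] with c' hcc' hc't
  exact le_blowUpSolution_of_lt ht hderiv hineq (by simpa [blowUpSolution] using h0) ha hcc' hc't

theorem ode_comparison_doubling_time_general
    (K c T : ℝ) (hK : 0 < K) (hc : 0 < c)
    (f f' : ℝ → ℝ)
    (hderiv : ∀ t ∈ Icc (0 : ℝ) T, HasDerivWithinAt f (f' t) (Icc (0 : ℝ) T) t)
    (hineq : ∀ t ∈ Icc (0 : ℝ) T, f' t ≤ 2 * c * (f t) ^ ((3 : ℝ) / 2))
    (h0 : f 0 ≤ K ^ 2) :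
    ∀ t ∈ Icc (0 : ℝ) T, t < 1 / (c * K) → f t ≤ ((K⁻¹ - c * t) ^ 2)⁻¹ := by
  intro t ht htK
  have hsub : Icc 0 t ⊆ Icc 0 T := Icc_subset_Icc_right ht.2
  have hct : 0 < K⁻¹ - c * t := by
    rw [lt_div_iff₀ (by positivity)] at htK
    rw [sub_pos, ← one_div, lt_div_iff₀ hK]
    linarith
  exact le_blowUpSolution ht.1 (fun x hx => (hderiv x (hsub hx)).mono hsub)
    (fun x hx => hineq x (hsub hx)) (by simpa [blowUpSolution] using h0) (inv_pos.2 hK) hct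

theorem ode_comparison_doubling_time
    (K c T : ℝ) (hK : 0 < K) (hc : 0 < c) (hT : 0 < T)
    (f f' : ℝ → ℝ)
    (hderiv : ∀ t ∈ Icc (0 : ℝ) T, HasDerivWithinAt f (f' t) (Icc (0 : ℝ) T) t)
    (hnonneg : ∀ t ∈ Icc (0 : ℝ) T, 0 ≤ f t)
    (hineq : ∀ t ∈ Icc (0 : ℝ) T, f' t ≤ 2 * c * (f t) ^ ((3 : ℝ) / 2))
    (h0 : f 0 ≤ K ^ 2) :
    ∀ t ∈ Icc (0 : ℝ) T, t < 1 / (c * K) → f t ≤ ((K⁻¹ - c * t) ^ 2)⁻¹ :=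
  ode_comparison_doubling_time_general K c T hK hc f f' hderiv hineq h0
end
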